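/- Let x = ε_A[t] and y = ε_B[s] be elements of S(G) with A,B finite subsets of G, t∈A. Then x·y = ε_{A ∪ tB}[ts] = ε_{(tss*t*A) ∪ (tB)}[ts], where ε_A denotes the product of ε_a over a∈A and tB = {tb : b∈B}. Moreover if both x and y are in normal form then the second expression is in normal form. -/

import Mathlib

universe u v

/-- An inverse semigroup: every element has a unique generalized inverse. -/
class InverseSemigroup (G : Type u) extends Semigroup G, Star G where
  mul_star_mul_self : ∀ s : G, s * star s * s = s
  star_mul_self_star : ∀ s : G, star s * s * star s = star s
  star_unique : ∀ s t : G, s * t * s = s → t * s * t = t → t = star s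

variable (G : Type u) [InverseSemigroup G]

/-- The defining relations of the prefix expansion S(G). -/
inductive ExpRel : FreeSemigroup G → FreeSemigroup G → Prop
  | rel1 (s t : G) : ExpRel (.of s * .of t * .of (star t)) (.of (s * t) * .of (star t))
  | rel2 (s t : G) : ExpRel (.of (star s) * .of s * .of t) (.of (star s) * .of (s * t))
  | rel3 (s : G) : ExpRel (.of s * .of (star s) * .of s) (.of s)

/-- The congruence generated by the defining relations. -/
def expCon : Con (FreeSemigroup G) := conGen (ExpRel G)

/-- The prefix expansion S(G) of the inverse semigroup G. -/
def SG : Type u := (expCon G).Quotient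

instance : Semigroup (SG G) := Con.semigroup (expCon G)

variable {G}

/-- The canonical generator [s] of S(G). -/
def gen (s : G) : SG G := ((FreeSemigroup.of s : FreeSemigroup G) : (expCon G).Quotient)

/-- ε_s = [s][s*] in S(G). -/
def eps (s : G) : SG G := gen s * gen (star s)

/-- ε_{s₁}⋯ε_{s_n}·x for a list [s₁,…,s_n]. -/
def epsList (l : List G) (x : SG G) : SG G := (l.map eps).foldr (· * ·) x

/-- ε_A · x for a finite set A ⊆ G. -/
noncomputable def epsSet (A : Finset G) (x : SG G) : SG G := epsList A.toList x

/-- The normal form condition on the pair (A, t). -/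
def IsNormalForm (A : Finset G) (t : G) : Prop :=
  t ∈ A ∧ t * star t ∈ A ∧ ∀ a ∈ A, a * star a = t * star t

/-- A partial homomorphism from an inverse semigroup to a semigroup. -/
structure IsPartialHom {H : Type v} [Semigroup H] (π : G → H) : Prop where
  rel1 : ∀ s t : G, π s * π t * π (star t) = π (s * t) * π (star t)
  rel2 : ∀ s t : G, π (star s) * π s * π t = π (star s) * π (s * t)
  rel3 : ∀ s : G, π s * π (star s) * π s = π s

/-- The natural partial order: x ≤ y iff x = y·e for some idempotent e. -/
def natLE {H : Type v} [Semigroup H] (x y : H) : Prop := ∃ e : H, e * e = e ∧ x = y * e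

/-- A filter in an inverse semigroup. -/
def IsFilter (ξ : Set G) : Prop :=
  ξ.Nonempty ∧ ∀ e s : G, e * e = e → (e * s ∈ ξ ↔ e ∈ ξ ∧ s ∈ ξ)

variable {G : Type u} [InverseSemigroup G]
open InverseSemigroup

lemma sstar_star (s : G) : star (star s) = s :=
  (star_unique (star s) s (star_mul_self_star s) (mul_star_mul_self s)).symm

lemma sstar_of_idem {e : G} (he : e * e = e) : star e = e :=
  (star_unique e e (by rw [he, he]) (by rw [he, he])).symm

lemma mss' (t : G) : ∀ y : G, t * (star t * (t * y)) = t * y := fun y => by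
  have := congrArg (· * y) (mul_star_mul_self t); simpa [mul_assoc] using this

lemma sms' (t : G) : ∀ y : G, star t * (t * (star t * y)) = star t * y := fun y => by
  have := congrArg (· * y) (star_mul_self_star t); simpa [mul_assoc] using this

lemma mss (t : G) : t * (star t * t) = t := by
  simpa [mul_assoc] using mul_star_mul_self t

lemma sms (t : G) : star t * (t * star t) = star t := by
  simpa [mul_assoc] using star_mul_self_star t

lemma idem_right (t : G) : (t * star t) * (t * star t) = t * star t := by
  rw [mul_assoc, sms]

lemma idem_left (t : G) : (star t * t) * (star t * t) = star t * t := by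
  rw [mul_assoc, mss]

private lemma idem_mul_aux (e f : G) (he : e * e = e) (hf : f * f = f) :
    e * f = star (e * f) ∧ (e * f) * (e * f) = e * f := by
  set x := star (e * f) with hx
  have he' : ∀ y : G, e * (e * y) = e * y := fun y => by rw [← mul_assoc, he]
  have hf' : ∀ y : G, f * (f * y) = f * y := fun y => by rw [← mul_assoc, hf]
  have h1 : (e * f) * x * (e * f) = e * f := mul_star_mul_self _
  have h2 : x * (e * f) * x = x := star_mul_self_star _
  have h1r : e * (f * (x * (e * f))) = e * f := by simpa [mul_assoc] using h1
  have h2' : ∀ y, x * (e * (f * (x * y))) = x * y := fun y => by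
    have := congrArg (· * y) h2; simpa [mul_assoc] using this
  have key : f * x * e = x := star_unique (e * f) (f * x * e)
    (by simp only [mul_assoc, he', hf']; simpa [mul_assoc] using h1r)
    (by simp only [mul_assoc, he', hf']; rw [h2' e])
  have hxx : x * x = x := by
    conv_lhs => rw [← key]
    simp only [mul_assoc]
    rw [h2' e]
    simpa [mul_assoc] using key
  have hefx : e * f = x := calc
    e * f = star x := (star_unique x (e * f) h2 h1)
    _ = x := sstar_of_idem hxx
  exact ⟨hefx.trans hx, by rw [hefx]; exact hxx⟩

lemma idem_mul_eq (e f : G) (he : e * e = e) (hf : f * f = f) :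
    e * f = star (e * f) := (idem_mul_aux e f he hf).1

lemma idem_mul_idem {e f : G} (he : e * e = e) (hf : f * f = f) :
    (e * f) * (e * f) = e * f := (idem_mul_aux e f he hf).2

lemma idem_comm {e f : G} (he : e * e = e) (hf : f * f = f) : e * f = f * e := by
  have hef : (e * f) * (e * f) = e * f := idem_mul_idem he hf
  have hfe : (f * e) * (f * e) = f * e := idem_mul_idem hf he
  have he' : ∀ y : G, e * (e * y) = e * y := fun y => by rw [← mul_assoc, he]
  have hf' : ∀ y : G, f * (f * y) = f * y := fun y => by rw [← mul_assoc, hf]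
  have h3 : (e * f) * (f * e) * (e * f) = e * f := by
    simp only [mul_assoc, he', hf']
    simpa [mul_assoc] using hef
  have h4 : (f * e) * (e * f) * (f * e) = f * e := by
    simp only [mul_assoc, he', hf']
    simpa [mul_assoc] using hfe
  have := star_unique (e * f) (f * e) h3 h4
  rw [this, ← idem_mul_eq e f he hf]

lemma sstar_mul (s t : G) : star (s * t) = star t * star s := by
  have hc : (t * star t) * (star s * s) = (star s * s) * (t * star t) :=
    idem_comm (idem_right t) (idem_left s)
  have hc' : ∀ y : G, t * (star t * (star s * (s * y))) = star s * (s * (t * (star t * y))) :=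
    fun y => by have := congrArg (· * y) hc; simpa [mul_assoc] using this
  refine (star_unique (s * t) (star t * star s) ?_ ?_).symm
  · show s * t * (star t * star s) * (s * t) = s * t
    simp only [mul_assoc]
    rw [hc' t, mss' s, mss t]
  · show star t * star s * (s * t) * (star t * star s) = star t * star s
    simp only [mul_assoc]
    rw [← hc' (star s), sms' t, sms s]


section SGtheory
open InverseSemigroup

lemma relE {G : Type u} [InverseSemigroup G] {a b : FreeSemigroup G} (h : ExpRel G a b) :
    (a : (expCon G).Quotient) = b :=
  (expCon G).eq.mpr (ConGen.Rel.of a b h)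

lemma gen_mul_def (s t : G) : gen s * gen t = ((FreeSemigroup.of s * FreeSemigroup.of t : FreeSemigroup G) : (expCon G).Quotient) := rfl

lemma r1 (s t : G) : gen s * (gen t * gen (star t)) = gen (s * t) * gen (star t) := by
  have h := relE (ExpRel.rel1 s t)
  simp [gen, Con.coe_mul, mul_assoc] at h ⊢; exact h

lemma r2 (s t : G) : gen (star s) * (gen s * gen t) = gen (star s) * gen (s * t) := by
  have h := relE (ExpRel.rel2 s t)
  simp [gen, Con.coe_mul, mul_assoc] at h ⊢; exact h

lemma r3 (s : G) : gen s * (gen (star s) * gen s) = gen s := by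
  have h := relE (ExpRel.rel3 s)
  simp [gen, Con.coe_mul, mul_assoc] at h ⊢; exact h

lemma r1' (s t : G) (y : SG G) :
    gen s * (gen t * (gen (star t) * y)) = gen (s * t) * (gen (star t) * y) := by
  have := congrArg (· * y) (r1 s t); simpa [mul_assoc] using this

lemma r2' (s t : G) (y : SG G) :
    gen (star s) * (gen s * (gen t * y)) = gen (star s) * (gen (s * t) * y) := by
  have := congrArg (· * y) (r2 s t); simpa [mul_assoc] using this

lemma r3' (s : G) (y : SG G) :
    gen s * (gen (star s) * (gen s * y)) = gen s * y := by
  have := congrArg (· * y) (r3 s); simpa [mul_assoc] using this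

lemma eps_def (r : G) : eps r = gen r * gen (star r) := rfl

lemma E4 (x y : G) : gen x * gen y = eps x * gen (x * y) := by
  rw [eps_def, mul_assoc, ← r2 x y, r3' x (gen y)]

lemma E4' (x y : G) : gen x * gen y = gen (x * y) * eps (star y) := by
  rw [eps_def, sstar_star]
  calc gen x * gen y = gen x * (gen y * (gen (star y) * gen y)) := by rw [r3]
  _ = gen (x * y) * (gen (star y) * gen y) := r1' x y (gen y)

lemma L1 (x r : G) : gen x * eps r = eps (x * r) * gen x := by
  have hc : (r * star r) * (star x * x) = (star x * x) * (r * star r) :=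
    idem_comm (idem_right r) (idem_left x)
  have hcr : r * (star r * (star x * x)) = star x * (x * (r * star r)) := by
    simpa [mul_assoc] using hc
  have aux : x * r * star r = x * r * (star (x * r) * x) := by
    rw [sstar_mul]
    simp only [mul_assoc]
    rw [hcr, mss' x]
  calc gen x * eps r = gen x * (gen r * gen (star r)) := by simp only [eps_def, mul_assoc]
  _ = gen (x * r) * gen (star r) := r1 x r
  _ = eps (x * r) * gen (x * r * star r) := E4 _ _
  _ = eps (x * r) * gen (x * r * (star (x * r) * x)) := by rw [aux]
  _ = eps (x * r) * gen ((x * r) * (star (x * r) * x)) := rfl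
  _ = gen (x * r) * gen (star (x * r) * x) := (E4 _ _).symm
  _ = gen (x * r) * (gen (star (x * r)) * (gen (x * r) * gen (star (x * r) * x))) :=
        (r3' (x * r) _).symm
  _ = gen (x * r) * (gen (star (x * r)) * (gen (star (star (x * r))) * gen (star (x * r) * x))) := by
        rw [sstar_star]
  _ = gen (x * r) * (eps (star (x * r)) * gen (star (x * r) * x)) := by
        rw [eps_def, mul_assoc]
  _ = gen (x * r) * (gen (star (x * r)) * gen x) := by rw [← E4 (star (x * r)) x]
  _ = eps (x * r) * gen x := by simp only [eps_def, mul_assoc]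

lemma L1' (r x : G) : eps r * gen x = gen x * eps (star x * r) := by
  have hc : (x * star x) * (r * star r) = (r * star r) * (x * star x) :=
    idem_comm (idem_right x) (idem_right r)
  have hc' : ∀ y : G, x * (star x * (r * (star r * y))) = r * (star r * (x * (star x * y))) :=
    fun y => by have := congrArg (· * y) hc; simpa [mul_assoc] using this
  have e1 : star (star r * x) = star x * r := by rw [sstar_mul, sstar_star]
  have e2 : r * (star r * x) = x * (star x * r) * star (star x * r) := by
    rw [sstar_mul, sstar_star]
    simp only [mul_assoc]
    rw [hc' x, mss x]
  calc eps r * gen x = gen r * (gen (star r) * gen x) := by simp only [eps_def, mul_assoc]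
  _ = gen r * gen (star r * x) := by
        have h := r2 (star r) x; rw [sstar_star] at h; exact h
  _ = gen (r * (star r * x)) * eps (star (star r * x)) := E4' _ _
  _ = gen (x * (star x * r) * star (star x * r)) * eps (star x * r) := by rw [e1, e2]
  _ = gen (x * (star x * r) * star (star x * r)) * eps (star (star (star x * r))) := by
        rw [sstar_star]
  _ = gen (x * (star x * r)) * gen (star (star x * r)) := (E4' _ _).symm
  _ = gen x * (gen (star x * r) * gen (star (star x * r))) := (r1 x _).symm
  _ = gen x * eps (star x * r) := by rw [eps_def]

lemma eps_idem (r : G) : eps r * eps r = eps r := by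
  have h := r3 (star r)
  rw [sstar_star] at h
  calc eps r * eps r = gen r * (gen (star r) * (gen r * gen (star r))) := by
        rw [eps_def]; simp only [mul_assoc]
  _ = gen r * gen (star r) := by rw [h]
  _ = eps r := rfl

lemma epsA (r p : G) : eps r * eps p = eps (r * (star r * p)) * eps r := by
  calc eps r * eps p = gen r * (gen (star r) * eps p) := by simp only [eps_def, mul_assoc]
  _ = gen r * (eps (star r * p) * gen (star r)) := by rw [L1]
  _ = (gen r * eps (star r * p)) * gen (star r) := by rw [mul_assoc]
  _ = (eps (r * (star r * p)) * gen r) * gen (star r) := by rw [L1]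
  _ = eps (r * (star r * p)) * eps r := by simp only [eps_def, mul_assoc]

lemma epsA' (r p : G) : eps p * eps r = eps r * eps (r * (star r * p)) := by
  have h := L1' (star r * p) (star r)
  rw [sstar_star] at h
  calc eps p * eps r = (eps p * gen r) * gen (star r) := by simp only [eps_def, mul_assoc]
  _ = (gen r * eps (star r * p)) * gen (star r) := by rw [L1']
  _ = gen r * (eps (star r * p) * gen (star r)) := by rw [mul_assoc]
  _ = gen r * (gen (star r) * eps (r * (star r * p))) := by rw [h]
  _ = eps r * eps (r * (star r * p)) := by simp only [eps_def, mul_assoc]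

lemma eps_comm (r p : G) : eps r * eps p = eps p * eps r := by
  have hq : r * (star r * (r * (star r * p))) = r * (star r * p) := mss' r _
  calc eps r * eps p = eps (r * (star r * p)) * eps r := epsA r p
  _ = eps (r * (star r * (r * (star r * p)))) * eps r := by rw [hq]
  _ = eps r * eps (r * (star r * p)) := (epsA r _).symm
  _ = eps p * eps r := (epsA' r p).symm

lemma E5 (u a : G) : eps u * eps a = eps u * eps (u * star u * a) := by
  rw [mul_assoc u (star u) a]
  calc eps u * eps a = eps (u * (star u * a)) * eps u := epsA u a
  _ = eps u * eps (u * (star u * a)) := eps_comm _ _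

lemma eps_gen (u : G) : eps u * gen u = gen u := by
  rw [eps_def, mul_assoc]; exact r3 u

lemma epsSet_def [DecidableEq G] (A : Finset G) (x : SG G) :
    epsSet A x = epsList A.toList x := rfl

lemma epsList_nil (x : SG G) : epsList ([] : List G) x = x := rfl

lemma epsList_cons (a : G) (l : List G) (x : SG G) :
    epsList (a :: l) x = eps a * epsList l x := rfl

lemma epsList_append (l m : List G) (x : SG G) :
    epsList (l ++ m) x = epsList l (epsList m x) := by
  simp [epsList]

lemma epsList_mul (l : List G) (x y : SG G) : epsList l x * y = epsList l (x * y) := by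
  induction l with
  | nil => rfl
  | cons a l ih => rw [epsList_cons, epsList_cons, mul_assoc, ih]

lemma eps_epsList (r : G) (l : List G) (x : SG G) :
    eps r * epsList l x = epsList l (eps r * x) := by
  induction l with
  | nil => rfl
  | cons a l ih =>
      rw [epsList_cons, epsList_cons, ← mul_assoc, eps_comm, mul_assoc, ih]

lemma gen_epsList (t : G) (l : List G) (x : SG G) :
    gen t * epsList l x = epsList (l.map (fun r => t * r)) (gen t * x) := by
  induction l with
  | nil => rfl
  | cons a l ih =>
      rw [epsList_cons, List.map_cons, epsList_cons, ← mul_assoc, L1, mul_assoc, ih]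

lemma epsU_epsList (u : G) (l : List G) (x : SG G) :
    eps u * epsList l x = epsList (l.map (fun a => u * star u * a)) (eps u * x) := by
  induction l with
  | nil => rfl
  | cons a l ih =>
      rw [epsList_cons, List.map_cons, epsList_cons, ← mul_assoc, E5 u a,
        eps_comm, mul_assoc, ih]

lemma eps_epsList_of_mem {a : G} {l : List G} (h : a ∈ l) (x : SG G) :
    eps a * epsList l x = epsList l x := by
  induction l with
  | nil => exact absurd h List.not_mem_nil
  | cons b l ih =>
      rcases List.mem_cons.mp h with rfl | h
      · rw [epsList_cons, ← mul_assoc, eps_idem]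
      · rw [epsList_cons, ← mul_assoc, eps_comm, mul_assoc, ih h]

lemma epsList_dedup [DecidableEq G] (l : List G) (x : SG G) :
    epsList l.dedup x = epsList l x := by
  induction l with
  | nil => rfl
  | cons a l ih =>
      by_cases h : a ∈ l
      · rw [List.dedup_cons_of_mem h, ih, epsList_cons, eps_epsList_of_mem h]
      · rw [List.dedup_cons_of_notMem h, epsList_cons, epsList_cons, ih]

lemma epsList_perm {l l' : List G} (h : l.Perm l') (x : SG G) :
    epsList l x = epsList l' x := by
  induction h with
  | nil => rfl
  | cons a h ih => rw [epsList_cons, epsList_cons, ih]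
  | swap a b l =>
      simp only [epsList_cons, ← mul_assoc]
      rw [eps_comm]
  | trans h1 h2 ih1 ih2 => rw [ih1, ih2]

lemma epsList_eq_epsSet [DecidableEq G] {l : List G} {A : Finset G}
    (h : l.toFinset = A) (x : SG G) : epsList l x = epsSet A x := by
  rw [epsSet, ← epsList_dedup l, ← epsList_dedup A.toList]
  exact epsList_perm (List.toFinset_eq_iff_perm_dedup.mp
    (by rw [h, Finset.toList_toFinset])) x

end SGtheory


private lemma list_toFinset_map {α β : Type*} [DecidableEq α] [DecidableEq β]
    (f : α → β) (l : List α) : (l.map f).toFinset = l.toFinset.image f := by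
  ext b; simp

theorem normal_form_mul (G : Type u) [InverseSemigroup G] [DecidableEq G]
    (A B : Finset G) (t s : G) (ht : t ∈ A) :
    epsSet A (gen t) * epsSet B (gen s)
        = epsSet (A ∪ B.image (fun b => t * b)) (gen (t * s)) ∧
    epsSet A (gen t) * epsSet B (gen s)
        = epsSet (A.image (fun a => t * s * star s * star t * a) ∪ B.image (fun b => t * b))
            (gen (t * s)) ∧
    (IsNormalForm A t → IsNormalForm B s →
      IsNormalForm (A.image (fun a => t * s * star s * star t * a) ∪ B.image (fun b => t * b))
        (t * s)) := by
  have hstar : ∀ a : G, t * s * star s * star t * a = (t * s) * star (t * s) * a := fun a => by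
    rw [sstar_mul]; simp only [mul_assoc]
  have h1 : epsSet A (gen t) * epsSet B (gen s)
      = epsList (A.toList ++ t :: B.toList.map (fun b => t * b)) (gen (t * s)) := by
    calc epsSet A (gen t) * epsSet B (gen s)
        = epsList A.toList (gen t * epsList B.toList (gen s)) := by
          rw [epsSet_def, epsSet_def, epsList_mul]
      _ = epsList A.toList (epsList (B.toList.map (fun b => t * b)) (gen t * gen s)) := by
          rw [gen_epsList]
      _ = epsList A.toList (epsList (B.toList.map (fun b => t * b)) (eps t * gen (t * s))) := by
          rw [E4]
      _ = epsList A.toList (eps t * epsList (B.toList.map (fun b => t * b)) (gen (t * s))) := by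
          rw [eps_epsList]
      _ = epsList (A.toList ++ t :: B.toList.map (fun b => t * b)) (gen (t * s)) := by
          rw [epsList_append, epsList_cons]
  have hT1 : (A.toList ++ t :: B.toList.map (fun b => t * b)).toFinset
      = A ∪ B.image (fun b => t * b) := by
    rw [List.toFinset_append, List.toFinset_cons, list_toFinset_map, Finset.toList_toFinset,
      Finset.toList_toFinset, Finset.union_insert,
      Finset.insert_eq_self.mpr (Finset.mem_union_left _ ht)]
  have first : epsSet A (gen t) * epsSet B (gen s)
      = epsSet (A ∪ B.image (fun b => t * b)) (gen (t * s)) :=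
    h1.trans (epsList_eq_epsSet hT1 _)
  have h2 : epsList ((B.image (fun b => t * b)).toList) (gen (t * s))
      = eps (t * s) * epsList ((B.image (fun b => t * b)).toList) (gen (t * s)) := by
    conv_rhs => rw [eps_epsList, eps_gen]
  have h3 : epsSet (A ∪ B.image (fun b => t * b)) (gen (t * s))
      = epsList (A.toList.map (fun a => (t * s) * star (t * s) * a)
          ++ (B.image (fun b => t * b)).toList) (gen (t * s)) := by
    calc epsSet (A ∪ B.image (fun b => t * b)) (gen (t * s))
        = epsList (A.toList ++ (B.image (fun b => t * b)).toList) (gen (t * s)) :=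
          (epsList_eq_epsSet (by
            rw [List.toFinset_append, Finset.toList_toFinset, Finset.toList_toFinset]) _).symm
      _ = epsList A.toList (epsList ((B.image (fun b => t * b)).toList) (gen (t * s))) := by
          rw [epsList_append]
      _ = epsList A.toList (eps (t * s)
            * epsList ((B.image (fun b => t * b)).toList) (gen (t * s))) := by
          conv_lhs => rw [h2]
      _ = eps (t * s) * epsList A.toList
            (epsList ((B.image (fun b => t * b)).toList) (gen (t * s))) :=
          (eps_epsList _ _ _).symm
      _ = epsList (A.toList.map (fun a => (t * s) * star (t * s) * a))
            (eps (t * s) * epsList ((B.image (fun b => t * b)).toList) (gen (t * s))) := by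
          rw [epsU_epsList]
      _ = epsList (A.toList.map (fun a => (t * s) * star (t * s) * a))
            (epsList ((B.image (fun b => t * b)).toList) (gen (t * s))) := by
          conv_lhs => rw [← h2]
      _ = epsList (A.toList.map (fun a => (t * s) * star (t * s) * a)
            ++ (B.image (fun b => t * b)).toList) (gen (t * s)) := by
          rw [epsList_append]
  have hT2 : (A.toList.map (fun a => (t * s) * star (t * s) * a)
        ++ (B.image (fun b => t * b)).toList).toFinset
      = A.image (fun a => t * s * star s * star t * a) ∪ B.image (fun b => t * b) := by
    rw [List.toFinset_append, list_toFinset_map, Finset.toList_toFinset, Finset.toList_toFinset]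
    exact congrArg (· ∪ B.image (fun b => t * b))
      (Finset.image_congr fun a _ => (hstar a).symm)
  have second : epsSet A (gen t) * epsSet B (gen s)
      = epsSet (A.image (fun a => t * s * star s * star t * a) ∪ B.image (fun b => t * b))
          (gen (t * s)) :=
    first.trans (h3.trans (epsList_eq_epsSet hT2 _))
  refine ⟨first, second, ?_⟩
  rintro ⟨hA1, hA2, hA3⟩ ⟨hB1, hB2, hB3⟩
  have hE : (t * s) * star (t * s) * (t * star t) = (t * s) * star (t * s) := by
    rw [sstar_mul]; simp only [mul_assoc]; rw [sms t]
  refine ⟨Finset.mem_union_right _ (Finset.mem_image.mpr ⟨s, hB1, rfl⟩), ?_, ?_⟩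
  · refine Finset.mem_union_left _ (Finset.mem_image.mpr ⟨t * star t, hA2, ?_⟩)
    rw [hstar (t * star t)]
    exact hE
  · intro c hc
    rcases Finset.mem_union.mp hc with hc | hc
    · obtain ⟨a, ha, rfl⟩ := Finset.mem_image.mp hc
      have ha' : a * star a = t * star t := hA3 a ha
      have ha'' : ∀ y : G, a * (star a * y) = t * (star t * y) := fun y => by
        have := congrArg (· * y) ha'; simpa [mul_assoc] using this
      have hE'' : ∀ y : G, t * (s * (star (t * s) * (t * (star t * y))))
          = t * (s * (star (t * s) * y)) := fun y => by
        have := congrArg (· * y) hE; simpa [mul_assoc] using this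
      rw [hstar a]
      have hst : star ((t * s) * star (t * s) * a) = star a * ((t * s) * star (t * s)) := by
        rw [sstar_mul, sstar_of_idem (idem_right (t * s))]
      rw [hst]
      simp only [mul_assoc]
      rw [ha'', hE'']
      simpa [mul_assoc] using idem_right (t * s)
    · obtain ⟨b, hb, rfl⟩ := Finset.mem_image.mp hc
      have hb' : b * star b = s * star s := hB3 b hb
      have hb'' : ∀ y : G, b * (star b * y) = s * (star s * y) := fun y => by
        have := congrArg (· * y) hb'; simpa [mul_assoc] using this
      show (t * b) * star (t * b) = (t * s) * star (t * s)
      rw [sstar_mul, sstar_mul]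
      simp only [mul_assoc]
      rw [hb'']
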